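/- Let C > 0 and let p satisfy 1 < p ≤ ∞. Let (W_n) be a sequence of P-variables with ‖W_n‖_p ≤ C for every n, and let W be a P-variable with d_M(W_n, W) → 0 as n → ∞. Then ‖W‖_p ≤ C. -/

import Mathlib

set_option autoImplicit false

open MeasureTheory Set
open scoped ENNReal NNReal

noncomputable section

/-- `ℝ^n` with the Euclidean metric. -/
abbrev RE (n : ℕ) : Type := EuclideanSpace ℝ (Fin n)

/-- The random vector `(f₁(x₁), f₁(x₂), …, f_k(x₁), f_k(x₂), W(x₁,x₂,x₁₂))`. -/
def sVec {Ω₁ Ω₂ : Type*} (k : ℕ) (f : Fin k → Ω₁ → ℝ)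
    (W : Ω₁ × Ω₁ × Ω₂ → ℝ) (x : Ω₁ × Ω₁ × Ω₂) : RE (2 * k + 1) :=
  (WithLp.equiv 2 (Fin (2 * k + 1) → ℝ)).symm fun i =>
    if _ : (i : ℕ) < 2 * k then
      if (i : ℕ) % 2 = 0 then f ⟨(i : ℕ) / 2, by omega⟩ x.1
      else f ⟨(i : ℕ) / 2, by omega⟩ x.2.1
    else W x

/-- `S(f₁,…,f_k,W)`: the pushforward of the product measure `P₁ ⊗ P₁ ⊗ P₂` under `sVec`. -/
def Smeasure {Ω₁ Ω₂ : Type*} [MeasurableSpace Ω₁] [MeasurableSpace Ω₂]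
    (P₁ : Measure Ω₁) (P₂ : Measure Ω₂) {k : ℕ} (f : Fin k → Ω₁ → ℝ)
    (W : Ω₁ × Ω₁ × Ω₂ → ℝ) : Measure (RE (2 * k + 1)) :=
  (P₁.prod (P₁.prod P₂)).map (sVec k f W)

/-- The `k`-profile `S_k(W)`. -/
def SkSet {Ω₁ Ω₂ : Type*} [MeasurableSpace Ω₁] [MeasurableSpace Ω₂]
    (P₁ : Measure Ω₁) (P₂ : Measure Ω₂) (k : ℕ)
    (W : Ω₁ × Ω₁ × Ω₂ → ℝ) : Set (Measure (RE (2 * k + 1))) :=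
  {μ | ∃ f : Fin k → Ω₁ → ℝ, (∀ i, Measurable (f i)) ∧
    (∀ i x, f i x ∈ Icc (-1 : ℝ) 1) ∧ μ = Smeasure P₁ P₂ f W}

/-- A function partition: `{0,1}`-valued measurable functions summing to `1`. -/
def IsFunctionPartition {Ω₁ : Type*} [MeasurableSpace Ω₁] {k : ℕ}
    (f : Fin k → Ω₁ → ℝ) : Prop :=
  (∀ i, Measurable (f i)) ∧ (∀ i x, f i x = 0 ∨ f i x = 1) ∧ ∀ x, ∑ i, f i x = 1

/-- The restricted `k`-profile `S'_k(W)`. -/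
def SkSet' {Ω₁ Ω₂ : Type*} [MeasurableSpace Ω₁] [MeasurableSpace Ω₂]
    (P₁ : Measure Ω₁) (P₂ : Measure Ω₂) (k : ℕ)
    (W : Ω₁ × Ω₁ × Ω₂ → ℝ) : Set (Measure (RE (2 * k + 1))) :=
  {μ | ∃ f : Fin k → Ω₁ → ℝ, IsFunctionPartition f ∧ μ = Smeasure P₁ P₂ f W}

/-- Hausdorff edistance (w.r.t. the Lévy–Prokhorov distance) between sets of measures. -/
def eHausLP {X : Type*} [MeasurableSpace X] [PseudoEMetricSpace X]
    (A B : Set (Measure X)) : ℝ≥0∞ :=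
  max (⨆ μ ∈ A, ⨅ ν ∈ B, levyProkhorovEDist μ ν)
      (⨆ ν ∈ B, ⨅ μ ∈ A, levyProkhorovEDist μ ν)

/-- Hausdorff distance (w.r.t. the Lévy–Prokhorov distance) between sets of measures. -/
def dHLP {X : Type*} [MeasurableSpace X] [PseudoEMetricSpace X]
    (A B : Set (Measure X)) : ℝ := (eHausLP A B).toReal

/-- A `P`-variable: a measurable real-valued function on a product `Ω₁ × Ω₁ × Ω₂`
of probability spaces. -/
structure PVar where
  (Ω₁ : Type*)
  (Ω₂ : Type*)
  [m₁ : MeasurableSpace Ω₁]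
  [m₂ : MeasurableSpace Ω₂]
  (P₁ : Measure Ω₁)
  (P₂ : Measure Ω₂)
  (prob₁ : IsProbabilityMeasure P₁)
  (prob₂ : IsProbabilityMeasure P₂)
  (W : Ω₁ × Ω₁ × Ω₂ → ℝ)
  (meas : Measurable W)

attribute [instance] PVar.m₁ PVar.m₂

/-- The underlying product probability measure of a `P`-variable. -/
def PVar.vol (V : PVar) : Measure (V.Ω₁ × V.Ω₁ × V.Ω₂) := V.P₁.prod (V.P₁.prod V.P₂)

/-- The `k`-profile of a `P`-variable. -/
def PVar.Sk (V : PVar) (k : ℕ) : Set (Measure (RE (2 * k + 1))) := SkSet V.P₁ V.P₂ k V.W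

/-- The restricted `k`-profile of a `P`-variable. -/
def PVar.Sk' (V : PVar) (k : ℕ) : Set (Measure (RE (2 * k + 1))) := SkSet' V.P₁ V.P₂ k V.W

/-- The `P`-variables metric `d_M`. -/
def dM (V U : PVar) : ℝ :=
  ∑' k : ℕ, (2 : ℝ)⁻¹ ^ (k + 1) * dHLP (V.Sk (k + 1)) (U.Sk (k + 1))

universe u₁ u₂ u₃ u₄

/-! The last coordinate of `ℝ^(2k+1)` is a `1`-Lipschitz map sending every measure of the
profile `S_k(W)` to the law of `W`, so the Lévy–Prokhorov distance between the laws of `W_n` and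
`W` is at most `d_H(S_1(W_n), S_1(W)) ≤ 2 d_M(W_n, W)`. Hence the laws converge weakly, and the
`L^p` norm of a continuous function is lower semicontinuous under weak convergence: by the
portmanteau theorem for open superlevel sets when `p < ∞`, and for the closed set `{‖x‖ ≤ C}`
when `p = ∞`. -/

open Filter Metric Topology

section WeakLowerSemicontinuity

variable {Ω E : Type*} [MeasurableSpace Ω] [TopologicalSpace Ω] [OpensMeasurableSpace Ω]
  [HasOuterApproxClosed Ω] [NormedAddCommGroup E] {f : Ω → E}
  {μs : ℕ → ProbabilityMeasure Ω} {μ : ProbabilityMeasure Ω}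

lemma eLpNorm_top_le_of_tendsto (hf : Continuous f) (hμs : Tendsto μs atTop (𝓝 μ))
    {c : ℝ≥0∞} (hc : ∀ n, eLpNorm f ∞ (μs n) ≤ c) :
    eLpNorm f ∞ μ ≤ c := by
  set F := {x | ‖f x‖ₑ ≤ c}
  have hF : IsClosed F := isClosed_le hf.enorm continuous_const
  have hFn : ∀ n, (μs n : Measure Ω) F = 1 := fun n => by
    rw [← measure_univ (μ := (μs n : Measure Ω)), ← ae_iff_measure_eq hF.nullMeasurableSet]
    filter_upwards [enorm_ae_le_eLpNormEssSup f (μs n : Measure Ω)] with x hx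
    exact hx.trans ((eLpNorm_exponent_top (f := f)).symm.trans_le (hc n))
  have hμF : (μ : Measure Ω) F = (μ : Measure Ω) univ := by
    refine le_antisymm (measure_mono (subset_univ F)) ?_
    simpa [hFn] using ProbabilityMeasure.limsup_measure_closed_le_of_tendsto hμs hF
  rw [eLpNorm_exponent_top]
  exact eLpNormEssSup_le_of_ae_enorm_bound ((ae_iff_measure_eq hF.nullMeasurableSet).2 hμF)

lemma eLpNorm_le_of_tendsto_of_ne_top (hf : Continuous f) (hμs : Tendsto μs atTop (𝓝 μ))
    {p : ℝ≥0∞} (hp0 : p ≠ 0) (hp : p ≠ ∞) {c : ℝ≥0∞} (hc : ∀ n, eLpNorm f p (μs n) ≤ c) :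
    eLpNorm f p μ ≤ c := by
  have hq : 0 < p.toReal := ENNReal.toReal_pos hp0 hp
  have hrpow : ∀ ν : Measure Ω,
      ∫⁻ x, ‖f x‖ₑ ^ p.toReal ∂ν = ∫⁻ x, ENNReal.ofReal (‖f x‖ ^ p.toReal) ∂ν := fun ν => by
    simp_rw [← ofReal_norm, ENNReal.ofReal_rpow_of_nonneg (norm_nonneg _) hq.le]
  simp only [eLpNorm_eq_lintegral_rpow_enorm_toReal hp0 hp, one_div,
    ENNReal.rpow_inv_le_iff hq, hrpow] at hc ⊢
  calc ∫⁻ x, ENNReal.ofReal (‖f x‖ ^ p.toReal) ∂μ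
      ≤ atTop.liminf (fun n => ∫⁻ x, ENNReal.ofReal (‖f x‖ ^ p.toReal) ∂(μs n)) :=
        lintegral_le_liminf_lintegral_of_forall_isOpen_measure_le_liminf_measure
          (hf.norm.rpow_const fun _ => Or.inr hq.le) (fun _ => by positivity)
          fun _ hG => ProbabilityMeasure.le_liminf_measure_open_of_tendsto hμs hG
    _ ≤ c ^ p.toReal := liminf_le_of_frequently_le' (Frequently.of_forall hc)

lemma eLpNorm_le_of_tendsto (hf : Continuous f) (hμs : Tendsto μs atTop (𝓝 μ))
    {p c : ℝ≥0∞} (hc : ∀ n, eLpNorm f p (μs n) ≤ c) :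
    eLpNorm f p μ ≤ c := by
  rcases eq_or_ne p 0 with rfl | hp0
  · simp
  rcases eq_or_ne p ∞ with rfl | hp
  · exact eLpNorm_top_le_of_tendsto hf hμs hc
  · exact eLpNorm_le_of_tendsto_of_ne_top hf hμs hp0 hp hc

end WeakLowerSemicontinuity

lemma levyProkhorovEDist_map_le_of_lipschitzWith_one {X Y : Type*} [MeasurableSpace X]
    [PseudoEMetricSpace X] [MeasurableSpace Y] [PseudoEMetricSpace Y] [OpensMeasurableSpace Y]
    {T : X → Y} (hTm : Measurable T) (hTl : LipschitzWith 1 T) (μ ν : Measure X) :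
    levyProkhorovEDist (μ.map T) (ν.map T) ≤ levyProkhorovEDist μ ν := by
  have thickening_preimage_subset (δ : ℝ) (B : Set Y) :
      thickening δ (T ⁻¹' B) ⊆ T ⁻¹' thickening δ B := fun y hy => by
    obtain ⟨x, hxB, hxy⟩ := (mem_thickening_iff_exists_edist_lt _ _).mp hy
    exact (mem_thickening_iff_exists_edist_lt _ _).mpr
      ⟨T x, hxB, lt_of_le_of_lt (by simpa using hTl y x) hxy⟩
  have map_le (μ ν : Measure X) {ε : ℝ≥0∞} (hε : levyProkhorovEDist μ ν < ε) {B : Set Y}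
      (hB : MeasurableSet B) : μ.map T B ≤ ν.map T (thickening ε.toReal B) + ε := by
    rw [Measure.map_apply hTm hB, Measure.map_apply hTm isOpen_thickening.measurableSet]
    exact (left_measure_le_of_levyProkhorovEDist_lt hε (hTm hB)).trans
      (add_le_add_left (measure_mono (thickening_preimage_subset _ B)) ε)
  refine levyProkhorovEDist_le_of_forall _ _ _ fun ε B hε _ hB => ⟨map_le μ ν hε hB, ?_⟩
  exact map_le ν μ (levyProkhorovEDist_comm μ ν ▸ hε) hB

section HausdorffLP

variable {X : Type*} [MeasurableSpace X] [PseudoEMetricSpace X] {A B : Set (Measure X)}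

lemma le_eHausLP_of_forall_le {δ : ℝ≥0∞} (hA : A.Nonempty)
    (h : ∀ μ ∈ A, ∀ ν ∈ B, δ ≤ levyProkhorovEDist μ ν) : δ ≤ eHausLP A B := by
  obtain ⟨μ, hμ⟩ := hA
  exact le_max_of_le_left (le_iSup₂_of_le μ hμ (le_iInf₂ (h μ hμ)))

lemma eHausLP_le_one (hA : A.Nonempty) (hB : B.Nonempty)
    (hAprob : ∀ μ ∈ A, IsProbabilityMeasure μ) (hBprob : ∀ ν ∈ B, IsProbabilityMeasure ν) :
    eHausLP A B ≤ 1 := by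
  have le_one : ∀ μ ∈ A, ∀ ν ∈ B, levyProkhorovEDist μ ν ≤ 1 := fun μ hμ ν hν => by
    have := hAprob μ hμ; have := hBprob ν hν
    simpa using levyProkhorovEDist_le_max_measure_univ μ ν
  obtain ⟨μ₀, hμ₀⟩ := hA
  obtain ⟨ν₀, hν₀⟩ := hB
  exact max_le (iSup₂_le fun μ hμ => iInf₂_le_of_le ν₀ hν₀ (le_one μ hμ ν₀ hν₀))
    (iSup₂_le fun ν hν => iInf₂_le_of_le μ₀ hμ₀ (le_one μ₀ hμ₀ ν hν))

lemma dHLP_nonneg : 0 ≤ dHLP A B := ENNReal.toReal_nonneg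

end HausdorffLP

lemma measurable_sVec {Ω₁ Ω₂ : Type*} [MeasurableSpace Ω₁] [MeasurableSpace Ω₂]
    {k : ℕ} {f : Fin k → Ω₁ → ℝ} {W : Ω₁ × Ω₁ × Ω₂ → ℝ}
    (hf : ∀ i, Measurable (f i)) (hW : Measurable W) : Measurable (sVec k f W) := by
  refine (WithLp.measurable_toLp 2 _).comp (measurable_pi_lambda _ fun i => ?_)
  by_cases hi : (i : ℕ) < 2 * k
  · simp only [hi, dif_pos]
    split_ifs
    · exact (hf _).comp measurable_fst
    · exact (hf _).comp (measurable_fst.comp measurable_snd)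
  · simpa only [hi, dif_neg, not_false_iff] using hW

@[simp]
lemma sVec_last {Ω₁ Ω₂ : Type*} (k : ℕ) (f : Fin k → Ω₁ → ℝ) (W : Ω₁ × Ω₁ × Ω₂ → ℝ)
    (x : Ω₁ × Ω₁ × Ω₂) : sVec k f W x (Fin.last (2 * k)) = W x := by
  simp [sVec]

lemma lipschitzWith_one_apply_last (k : ℕ) :
    LipschitzWith 1 fun y : RE (2 * k + 1) => y (Fin.last (2 * k)) := by
  have h := (LipschitzWith.eval (Fin.last (2 * k))).comp
    (PiLp.lipschitzWith_ofLp 2 fun _ : Fin (2 * k + 1) => ℝ)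
  rwa [mul_one] at h

namespace PVar

instance (V : PVar) : IsProbabilityMeasure V.vol :=
  haveI := V.prob₁; haveI := V.prob₂; inferInstanceAs (IsProbabilityMeasure (V.P₁.prod _))

def law (V : PVar) : ProbabilityMeasure ℝ :=
  ⟨V.vol.map V.W, Measure.isProbabilityMeasure_map V.meas.aemeasurable⟩

lemma eLpNorm_id_law (V : PVar) (p : ℝ≥0∞) :
    eLpNorm id p (V.law : Measure ℝ) = eLpNorm V.W p V.vol :=
  eLpNorm_map_measure aestronglyMeasurable_id V.meas.aemeasurable

lemma Sk_nonempty (V : PVar) (k : ℕ) : (V.Sk k).Nonempty :=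
  ⟨_, fun _ _ => 0, fun _ => measurable_const, fun _ _ => ⟨by norm_num, by norm_num⟩, rfl⟩

lemma isProbabilityMeasure_of_mem_Sk {V : PVar} {k : ℕ} {μ : Measure (RE (2 * k + 1))}
    (hμ : μ ∈ V.Sk k) : IsProbabilityMeasure μ := by
  obtain ⟨f, hf, -, rfl⟩ := hμ
  have := V.prob₁; have := V.prob₂
  exact Measure.isProbabilityMeasure_map (measurable_sVec hf V.meas).aemeasurable

lemma map_apply_last_of_mem_Sk {V : PVar} {k : ℕ} {μ : Measure (RE (2 * k + 1))}
    (hμ : μ ∈ V.Sk k) : μ.map (fun y => y (Fin.last (2 * k))) = V.law := by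
  obtain ⟨f, hf, -, rfl⟩ := hμ
  have last_comp : (fun y : RE (2 * k + 1) => y (Fin.last (2 * k))) ∘ sVec k f V.W = V.W :=
    funext (sVec_last k f V.W)
  rw [Smeasure, Measure.map_map (by fun_prop) (measurable_sVec hf V.meas), last_comp]
  rfl

lemma levyProkhorovEDist_law_le_eHausLP (V U : PVar) (k : ℕ) :
    levyProkhorovEDist (V.law : Measure ℝ) U.law ≤ eHausLP (V.Sk k) (U.Sk k) := by
  refine le_eHausLP_of_forall_le (V.Sk_nonempty k) fun μ hμ ν hν => ?_
  rw [← map_apply_last_of_mem_Sk hμ, ← map_apply_last_of_mem_Sk hν]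
  exact levyProkhorovEDist_map_le_of_lipschitzWith_one (by fun_prop)
    (lipschitzWith_one_apply_last k) μ ν

lemma eHausLP_Sk_le_one (V U : PVar) (k : ℕ) : eHausLP (V.Sk k) (U.Sk k) ≤ 1 :=
  eHausLP_le_one (V.Sk_nonempty k) (U.Sk_nonempty k)
    (fun _ => isProbabilityMeasure_of_mem_Sk) (fun _ => isProbabilityMeasure_of_mem_Sk)

lemma dHLP_Sk_le_one (V U : PVar) (k : ℕ) : dHLP (V.Sk k) (U.Sk k) ≤ 1 :=
  ENNReal.toReal_le_of_le_ofReal zero_le_one (by simpa using V.eHausLP_Sk_le_one U k)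

end PVar

lemma summable_dM (V U : PVar) :
    Summable fun k : ℕ => (2 : ℝ)⁻¹ ^ (k + 1) * dHLP (V.Sk (k + 1)) (U.Sk (k + 1)) :=
  (summable_geometric_two' 1).of_nonneg_of_le
    (fun k => mul_nonneg (pow_nonneg (by norm_num) (k + 1)) dHLP_nonneg)
    fun k => (mul_le_of_le_one_right (pow_nonneg (by norm_num) (k + 1))
      (V.dHLP_Sk_le_one U (k + 1))).trans_eq (by rw [inv_pow]; field_simp; ring)

lemma levyProkhorovDist_law_le_two_mul_dM (V U : PVar) :
    levyProkhorovDist (V.law : Measure ℝ) U.law ≤ 2 * dM V U := by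
  have first_term_le : (2 : ℝ)⁻¹ * dHLP (V.Sk 1) (U.Sk 1) ≤ dM V U := by
    simpa [dM] using (summable_dM V U).le_tsum 0
      fun k _ => mul_nonneg (pow_nonneg (by norm_num) (k + 1)) dHLP_nonneg
  have law_le : levyProkhorovDist (V.law : Measure ℝ) U.law ≤ dHLP (V.Sk 1) (U.Sk 1) :=
    ENNReal.toReal_mono (ne_top_of_le_ne_top ENNReal.one_ne_top (V.eHausLP_Sk_le_one U 1))
      (V.levyProkhorovEDist_law_le_eHausLP U 1)
  linarith

lemma tendsto_law_of_tendsto_dM {V : ℕ → PVar} {U : PVar}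
    (hV : Tendsto (fun n => dM (V n) U) atTop (𝓝 0)) :
    Tendsto (fun n => (V n).law) atTop (𝓝 U.law) := by
  have hLP : Tendsto (fun n => LevyProkhorov.ofMeasure (V n).law) atTop
      (𝓝 (LevyProkhorov.ofMeasure U.law)) := by
    rw [tendsto_iff_dist_tendsto_zero]
    refine squeeze_zero (fun _ => dist_nonneg) (fun n => ?_) (by simpa using hV.const_mul 2)
    exact levyProkhorovDist_law_le_two_mul_dM (V n) U
  exact (LevyProkhorov.continuous_toMeasure_probabilityMeasure.tendsto _).comp hLP

theorem eLpNorm_le_of_dM_tendsto_zero_general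
    (C : ℝ) (p : ℝ≥0∞)
    (V : ℕ → PVar.{u₁, u₂}) (Vlim : PVar.{u₃, u₄})
    (hbound : ∀ n, eLpNorm (V n).W p (V n).vol ≤ ENNReal.ofReal C)
    (hconv : Filter.Tendsto (fun n => dM (V n) Vlim) Filter.atTop (nhds 0)) :
    eLpNorm Vlim.W p Vlim.vol ≤ ENNReal.ofReal C := by
  rw [← Vlim.eLpNorm_id_law]
  refine eLpNorm_le_of_tendsto continuous_id (tendsto_law_of_tendsto_dM hconv) fun n => ?_
  rw [PVar.eLpNorm_id_law]
  exact hbound n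

/-- If `‖W_n‖_p ≤ C` for every `n` (with `1 < p ≤ ∞`) and
`d_M(W_n, W) → 0`, then `‖W‖_p ≤ C`. -/
theorem eLpNorm_le_of_dM_tendsto_zero
    (C : ℝ) (hC : 0 < C) (p : ℝ≥0∞) (hp : 1 < p)
    (V : ℕ → PVar.{u₁, u₂}) (Vlim : PVar.{u₃, u₄})
    (hbound : ∀ n, eLpNorm (V n).W p (V n).vol ≤ ENNReal.ofReal C)
    (hconv : Filter.Tendsto (fun n => dM (V n) Vlim) Filter.atTop (nhds 0)) :
    eLpNorm Vlim.W p Vlim.vol ≤ ENNReal.ofReal C :=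
  eLpNorm_le_of_dM_tendsto_zero_general C p V Vlim hbound hconv

end
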